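/- arXiv:1008.3039 — 2 statements merged into one kernel-verified Lean document; each statement's English description precedes it below -/
import Mathlib

section
/- Let n be a positive integer and let R be a family of reals indexed by four indices in Fin n satisfying the curvature symmetries and the first Bianchi identity. Define g : ℝⁿ → Matrix (Fin n) (Fin n) ℝ by g(x)_{ij} = δ_{ij} - (1/3)·∑_{k,l} R i k j l · x_k x_l. Then g(x) is invertible for all x in some neighborhood of 0, and if on that neighborhood one defines the Christoffel symbols Γ^k_{ij}(x) = (1/2)·∑_l (g(x)⁻¹)_{kl}·(∂_j g(x)_{il} + ∂_i g(x)_{jl} - ∂_l g(x)_{ij}), then Γ^k_{ij}(0) = 0 and the partial derivative ∂_a Γ^k_{ij} at x = 0 equals (1/3)·(R i a j k + R j a i k). -/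
open ContinuousLinearMap

open ContinuousLinearMap in
theorem hasFDerivAt_quad' {n : ℕ} (A : Fin n → Fin n → ℝ) (x : Fin n → ℝ) :
    HasFDerivAt (fun y : Fin n → ℝ => ∑ k, ∑ l, A k l * y k * y l)
      (∑ k, ∑ l, A k l • (x k • (proj l : (Fin n → ℝ) →L[ℝ] ℝ)
        + x l • (proj k : (Fin n → ℝ) →L[ℝ] ℝ))) x := by
  refine HasFDerivAt.fun_sum fun k _ => HasFDerivAt.fun_sum fun l _ => ?_
  have hk : HasFDerivAt (fun y : Fin n → ℝ => y k) (proj k : (Fin n → ℝ) →L[ℝ] ℝ) x := by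
    exact (proj k : (Fin n → ℝ) →L[ℝ] ℝ).hasFDerivAt
  have hl : HasFDerivAt (fun y : Fin n → ℝ => y l) (proj l : (Fin n → ℝ) →L[ℝ] ℝ) x := by
    exact (proj l : (Fin n → ℝ) →L[ℝ] ℝ).hasFDerivAt
  have := (hk.mul hl).const_mul (A k l)
  simpa [mul_assoc] using this

open ContinuousLinearMap in
theorem hasFDerivAt_lin' {n : ℕ} (c : Fin n → ℝ) (x : Fin n → ℝ) :
    HasFDerivAt (fun y : Fin n → ℝ => ∑ m, c m * y m)
      (∑ m, c m • (proj m : (Fin n → ℝ) →L[ℝ] ℝ)) x := by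
  refine HasFDerivAt.fun_sum fun m _ => ?_
  have hm : HasFDerivAt (fun y : Fin n → ℝ => y m) (proj m : (Fin n → ℝ) →L[ℝ] ℝ) x := by
    exact (proj m : (Fin n → ℝ) →L[ℝ] ℝ).hasFDerivAt
  exact hm.const_mul (c m)

theorem diffAt_prod' {n : ℕ} {ι : Type*} [Fintype ι] [DecidableEq ι]
    {f : ι → (Fin n → ℝ) → ℝ} {x : Fin n → ℝ}
    (h : ∀ i, DifferentiableAt ℝ (f i) x) :
    DifferentiableAt ℝ (fun y => ∏ i, f i y) x := by
  have h' : ∀ i : ι, HasFDerivAt (f i) (fderiv ℝ (f i) x) x := fun i => (h i).hasFDerivAt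
  exact (HasFDerivAt.finset_prod (fun i _ => h' i)).differentiableAt



open scoped Topology

/-- the metric in Riemannian normal coordinates
`g(x)_{ij} = δ_{ij} - (1/3) ∑_{k,l} R i k j l x_k x_l` is invertible near `0`,
the associated Christoffel symbols vanish at the center, and their first
derivatives at the center are `∂_a Γ^k_{ij}(0) = (1/3)(R i a j k + R j a i k)`. -/
theorem christoffel_normal_coordinates
    (n : ℕ) (hn : 0 < n)
    (R : Fin n → Fin n → Fin n → Fin n → ℝ)
    (hR1 : ∀ i j k l, R i j k l = -R j i k l)
    (hR2 : ∀ i j k l, R i j k l = -R i j l k)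
    (hR3 : ∀ i j k l, R i j k l = R k l i j)
    (hBianchi : ∀ i j k l, R i j k l + R j k i l + R k i j l = 0)
    (g : (Fin n → ℝ) → Matrix (Fin n) (Fin n) ℝ)
    (hg : ∀ x i j, g x i j
      = (if i = j then (1 : ℝ) else 0)
        - (1 / 3 : ℝ) * ∑ k, ∑ l, R i k j l * x k * x l)
    (Γ : (Fin n → ℝ) → Fin n → Fin n → Fin n → ℝ)
    (hΓ : ∀ x k i j, Γ x k i j
      = (1 / 2 : ℝ) * ∑ l, (g x)⁻¹ k l *
          (fderiv ℝ (fun y => g y i l) x (Pi.single j 1)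
           + fderiv ℝ (fun y => g y j l) x (Pi.single i 1)
           - fderiv ℝ (fun y => g y i j) x (Pi.single l 1))) :
    (∃ U ∈ 𝓝 (0 : Fin n → ℝ), ∀ x ∈ U, IsUnit (g x)) ∧
    (∀ k i j, Γ 0 k i j = 0) ∧
    (∀ a k i j, fderiv ℝ (fun x => Γ x k i j) 0 (Pi.single a 1)
      = (1 / 3 : ℝ) * (R i a j k + R j a i k)) := by
  classical
  have hEnt : ∀ (p q : Fin n) (x : Fin n → ℝ), HasFDerivAt (fun y => g y p q)
      (-((1/3 : ℝ) • ∑ s, ∑ t, R p s q t • (x s • (proj t : (Fin n → ℝ) →L[ℝ] ℝ)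
        + x t • (proj s : (Fin n → ℝ) →L[ℝ] ℝ)))) x := by
    intro p q x
    have h0 : (fun y => g y p q)
        = fun y : Fin n → ℝ => (if p = q then (1:ℝ) else 0)
            - (1/3 : ℝ) * ∑ s, ∑ t, R p s q t * y s * y t :=
      funext fun y => hg y p q
    rw [h0]
    exact ((hasFDerivAt_quad' (fun s t => R p s q t) x).const_mul (1/3 : ℝ)).const_sub _
  have hE : ∀ (p q d : Fin n) (x : Fin n → ℝ),
      fderiv ℝ (fun y => g y p q) x (Pi.single d 1)
        = ∑ m, (-(1/3 : ℝ) * (R p m q d + R p d q m)) * x m := by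
    intro p q d x
    rw [(hEnt p q x).fderiv]
    simp only [ContinuousLinearMap.neg_apply, ContinuousLinearMap.smul_apply,
      ContinuousLinearMap.sum_apply, ContinuousLinearMap.add_apply,
      ContinuousLinearMap.proj_apply, Pi.single_apply, smul_eq_mul]
    rw [show ∑ m, -(1/3 : ℝ) * (R p m q d + R p d q m) * x m
        = -(1/3 * ((∑ m, R p m q d * x m) + ∑ m, R p d q m * x m)) by
      rw [mul_add, Finset.mul_sum, Finset.mul_sum, neg_add, ← Finset.sum_neg_distrib,
        ← Finset.sum_neg_distrib, ← Finset.sum_add_distrib]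
      exact Finset.sum_congr rfl fun m _ => by ring]
    congr 1
    congr 1
    simp only [mul_add, Finset.sum_add_distrib]
    congr 1
    · refine Finset.sum_congr rfl fun s _ => ?_
      simp [mul_ite, mul_one, mul_zero, Finset.sum_ite_eq']
    · rw [show (∑ s, ∑ t, R p s q t * (x t * if s = d then 1 else 0))
          = ∑ s, if s = d then ∑ t, R p s q t * x t else 0 from
        Finset.sum_congr rfl fun s _ => by by_cases h : s = d <;> simp [h]]
      simp [Finset.sum_ite_eq']
  -- basic facts
  have hdiff_entry : ∀ p q : Fin n, Differentiable ℝ (fun y => g y p q) :=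
    fun p q x => (hEnt p q x).differentiableAt
  have g0 : g 0 = 1 := by
    ext i j
    simp [hg, Matrix.one_apply]
  -- determinant and adjugate differentiability
  have hdet : Differentiable ℝ (fun x => (g x).det) := by
    have h0 : (fun x => (g x).det)
        = fun x => ∑ σ : Equiv.Perm (Fin n), (Equiv.Perm.sign σ : ℝ) * ∏ i, g x (σ i) i := by
      funext x
      rw [Matrix.det_apply']
    rw [h0]
    intro x
    refine DifferentiableAt.fun_sum fun σ _ => DifferentiableAt.const_mul ?_ _
    exact diffAt_prod' fun i => (hdiff_entry (σ i) i) x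
  have hadj : ∀ p q : Fin n, Differentiable ℝ (fun x => (g x).adjugate p q) := by
    intro p q
    have h0 : (fun x => (g x).adjugate p q)
        = fun x => ∑ σ : Equiv.Perm (Fin n),
            (Equiv.Perm.sign σ : ℝ) * ∏ i, ((g x).updateRow q (Pi.single p 1)) (σ i) i := by
      funext x
      rw [Matrix.adjugate_apply, Matrix.det_apply']
    rw [h0]
    intro x
    refine DifferentiableAt.fun_sum fun σ _ => DifferentiableAt.const_mul ?_ _
    refine diffAt_prod' fun i => ?_
    by_cases h : σ i = q
    · simp only [Matrix.updateRow_apply, h, if_true]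
      exact differentiableAt_const _
    · simp only [Matrix.updateRow_apply, h, if_false]
      exact (hdiff_entry (σ i) i) x
  have hdet0 : (g 0).det = 1 := by rw [g0, Matrix.det_one]
  have hinv_diff : ∀ p q : Fin n, DifferentiableAt ℝ (fun x => (g x)⁻¹ p q) 0 := by
    intro p q
    have h0 : (fun x => (g x)⁻¹ p q) = fun x => ((g x).det)⁻¹ * (g x).adjugate p q := by
      funext x
      rw [Matrix.inv_def, Matrix.smul_apply, Ring.inverse_eq_inv, smul_eq_mul]
    rw [h0]
    exact ((hdet 0).inv (by rw [hdet0]; norm_num)).mul ((hadj p q) 0)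
  refine ⟨?_, ?_, ?_⟩
  · -- invertibility near 0
    refine ⟨{x | (g x).det ≠ 0}, ?_, fun x hx => ?_⟩
    · exact hdet.continuous.continuousAt.eventually_ne (by rw [hdet0]; norm_num)
    · exact (Matrix.isUnit_iff_isUnit_det _).2 (isUnit_iff_ne_zero.2 hx)
  · -- Christoffel symbols vanish at 0
    intro k i j
    rw [hΓ]
    simp [hE]
  · -- derivative of Christoffel symbols at 0
    intro a k i j
    set C : Fin n → Fin n → ℝ := fun l m =>
      -(1/3 : ℝ) * (R i m l j + R i j l m) + -(1/3 : ℝ) * (R j m l i + R j i l m)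
        - -(1/3 : ℝ) * (R i m j l + R i l j m) with hC
    have hfun : (fun x => Γ x k i j)
        = fun x => (1/2 : ℝ) * ∑ l, (g x)⁻¹ k l * ∑ m, C l m * x m := by
      funext x
      rw [hΓ]
      congr 1
      refine Finset.sum_congr rfl fun l _ => ?_
      rw [hE, hE, hE]
      congr 1
      rw [← Finset.sum_add_distrib, ← Finset.sum_sub_distrib]
      exact Finset.sum_congr rfl fun m _ => by rw [hC]; ring
    have hder : HasFDerivAt (fun x => Γ x k i j)
        ((1/2 : ℝ) • ∑ l, (((g 0)⁻¹ k l) • (∑ m, C l m • (proj m : (Fin n → ℝ) →L[ℝ] ℝ))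
          + (∑ m, C l m * (0 : Fin n → ℝ) m) • fderiv ℝ (fun x => (g x)⁻¹ k l) 0)) 0 := by
      rw [hfun]
      refine HasFDerivAt.const_mul (HasFDerivAt.fun_sum fun l _ => ?_) _
      exact ((hinv_diff k l).hasFDerivAt).mul (hasFDerivAt_lin' (C l) 0)
    rw [hder.fderiv]
    have hsimp : ∀ l : Fin n, (∑ m, C l m * (0 : Fin n → ℝ) m) = 0 := by
      simp
    simp only [ContinuousLinearMap.smul_apply, ContinuousLinearMap.sum_apply,
      ContinuousLinearMap.add_apply, ContinuousLinearMap.proj_apply, hsimp, zero_smul,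
      ContinuousLinearMap.zero_apply, add_zero, g0, inv_one, Matrix.one_apply,
      smul_eq_mul, Pi.single_apply]
    rw [show (∑ l, (if k = l then (1:ℝ) else 0) * ∑ m, C l m * if m = a then 1 else 0)
        = ∑ l, if k = l then (∑ m, C l m * if m = a then 1 else 0) else 0 from
      Finset.sum_congr rfl fun l _ => by by_cases h : k = l <;> simp [h]]
    rw [Finset.sum_ite_eq, if_pos (Finset.mem_univ k)]
    rw [show (∑ m, C k m * if m = a then 1 else 0) = C k a by
      simp [mul_ite, Finset.sum_ite_eq']]
    have h1 := hR1 i j k a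
    have h2 := hR2 i a k j
    have h3 := hR2 j a k i
    have h4 := hR3 i k j a
    rw [hC]
    linarith
end

section
/- Let n = 2p be an even positive integer and let γ_1, …, γ_n be complex 2^p × 2^p matrices satisfying the Clifford relations γ_i γ_j + γ_j γ_i = -2 δ_{ij}·I, with grading operator Γ := i^p · γ_1 ⋯ γ_n. Define σ_{ij} := (1/4) γ_i γ_j for i ≠ j. Then for every permutation τ of {1, …, n}, tr(Γ · σ_{τ(1)τ(2)} · σ_{τ(3)τ(4)} ⋯ σ_{τ(n-1)τ(n)}) = sign(τ) · (-i)^p / 2^p. -/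
section St9Helpers

variable {R : Type*} [Ring R]

lemma st9_move (x : R) : ∀ (l : List R), (∀ z ∈ l, x * z = -(z * x)) →
    x * l.prod = (-1 : R) ^ l.length * (l.prod * x) := by
  intro l
  induction l with
  | nil => simp
  | cons a t ih =>
    intro h
    have ha : x * a = -(a * x) := h a (by simp)
    have ht : ∀ z ∈ t, x * z = -(z * x) := fun z hz => h z (by simp [hz])
    have hc : a * (-1 : R) ^ t.length = (-1 : R) ^ t.length * a :=
      ((Commute.neg_one_right a).pow_right _).eq
    simp only [List.prod_cons, List.length_cons]
    calc x * (a * t.prod) = (x * a) * t.prod := by rw [mul_assoc]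
      _ = -(a * (x * t.prod)) := by rw [ha]; simp [mul_assoc]
      _ = -(a * ((-1:R) ^ t.length * (t.prod * x))) := by rw [ih ht]
      _ = -((a * (-1:R) ^ t.length) * (t.prod * x)) := by rw [mul_assoc]
      _ = -(((-1:R) ^ t.length * a) * (t.prod * x)) := by rw [hc]
      _ = (-1 : R) ^ (t.length + 1) * (a * t.prod * x) := by
          rw [pow_succ, mul_neg_one]
          simp [mul_assoc]

lemma st9_swap_prod (l1 l2 l3 : List R) (x y : R)
    (hxy : x * y = -(y * x))
    (hx : ∀ z ∈ l2, x * z = -(z * x)) (hy : ∀ z ∈ l2, y * z = -(z * y)) :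
    (l1 ++ y :: (l2 ++ x :: l3)).prod = -(l1 ++ x :: (l2 ++ y :: l3)).prod := by
  have key : (y :: (l2 ++ x :: l3)).prod = -(x :: (l2 ++ y :: l3)).prod := by
    have hmx := st9_move x l2 hx
    have hmy := st9_move y l2 hy
    have hyx : y * x = -(x * y) := by rw [hxy, neg_neg]
    simp only [List.prod_cons, List.prod_append, List.prod_cons]
    calc y * (l2.prod * (x * l3.prod))
        = (y * l2.prod) * (x * l3.prod) := by rw [mul_assoc]
      _ = ((-1:R) ^ l2.length * (l2.prod * y)) * (x * l3.prod) := by rw [hmy]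
      _ = (-1:R) ^ l2.length * (l2.prod * ((y * x) * l3.prod)) := by
          simp [mul_assoc]
      _ = -((-1:R) ^ l2.length * (l2.prod * ((x * y) * l3.prod))) := by
          rw [hyx]; simp [mul_assoc]
      _ = -(((-1:R) ^ l2.length * (l2.prod * x)) * (y * l3.prod)) := by
          simp [mul_assoc]
      _ = -((x * l2.prod) * (y * l3.prod)) := by rw [← hmx]
      _ = -(x * (l2.prod * (y * l3.prod))) := by rw [mul_assoc]
  simp only [List.prod_append, key, mul_neg]

lemma st9_range_split (m n : ℕ) (h : m < n) :
    List.range n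
      = List.range m ++ m :: (List.range (n - m - 1)).map (fun i => m + 1 + i) := by
  have e : n = m + (1 + (n - m - 1)) := by omega
  conv_lhs => rw [e]
  rw [List.range_add, List.range_add, List.map_append, List.map_map]
  simp only [List.range_succ, List.range_zero, List.nil_append, List.map_cons,
    List.map_nil, Nat.add_zero]
  congr 1
  simp only [List.singleton_append, List.cons.injEq, true_and]
  congr 1
  funext i
  simp only [Function.comp]
  omega

lemma st9_range_split2 (a b n : ℕ) (hab : a < b) (hbn : b < n) :
    ∃ L1 L2 L3 : List ℕ,
      List.range n = L1 ++ a :: (L2 ++ b :: L3)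
      ∧ (∀ z ∈ L1, z ≠ a ∧ z ≠ b) ∧ (∀ z ∈ L2, z ≠ a ∧ z ≠ b)
      ∧ (∀ z ∈ L3, z ≠ a ∧ z ≠ b) := by
  have d1 := st9_range_split a n (lt_trans hab hbn)
  have d2 := st9_range_split (b - a - 1) (n - a - 1) (by omega)
  refine ⟨List.range a, (List.range (b - a - 1)).map (fun i => a + 1 + i),
    ((List.range (n - a - 1 - (b - a - 1) - 1)).map
      (fun i => b - a - 1 + 1 + i)).map (fun i => a + 1 + i), ?_, ?_, ?_, ?_⟩
  · rw [d1, d2, List.map_append, List.map_cons]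
    have : a + 1 + (b - a - 1) = b := by omega
    rw [this]
  · intro z hz
    have := List.mem_range.mp hz
    omega
  · intro z hz
    obtain ⟨i, hi, rfl⟩ := List.mem_map.mp hz
    have := List.mem_range.mp hi
    omega
  · intro z hz
    obtain ⟨i, hi, rfl⟩ := List.mem_map.mp hz
    obtain ⟨j, hj, rfl⟩ := List.mem_map.mp hi
    omega

lemma st9_range_swap (n a b : ℕ) (g : ℕ → R) (hab : a < b) (hbn : b < n)
    (hanti : ∀ i j, i < n → j < n → i ≠ j → g i * g j = -(g j * g i)) :
    ((List.range n).map
        (fun i => if i = a then g b else if i = b then g a else g i)).prod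
      = -(((List.range n).map g).prod) := by
  obtain ⟨L1, L2, L3, heq, h1, h2, h3⟩ := st9_range_split2 a b n hab hbn
  set f : ℕ → R := fun i => if i = a then g b else if i = b then g a else g i with hf
  have hmem : ∀ z ∈ L2, z < n := by
    intro z hz
    have : z ∈ List.range n := by rw [heq]; simp [hz]
    exact List.mem_range.mp this
  have hcongr : ∀ L : List ℕ, (∀ z ∈ L, z ≠ a ∧ z ≠ b) → L.map f = L.map g := by
    intro L hL
    apply List.map_congr_left
    intro z hz
    simp [hf, (hL z hz).1, (hL z hz).2]
  have hfa : f a = g b := by simp [hf]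
  have hfb : f b = g a := by simp [hf, (Nat.ne_of_lt hab).symm]
  rw [heq]
  simp only [List.map_append, List.map_cons, hcongr L1 h1, hcongr L2 h2,
    hcongr L3 h3, hfa, hfb]
  exact st9_swap_prod (L1.map g) (L2.map g) (L3.map g) (g a) (g b)
    (hanti a b (lt_trans hab hbn) hbn (Nat.ne_of_lt hab))
    (by
      intro z hz
      obtain ⟨j, hj, rfl⟩ := List.mem_map.mp hz
      exact hanti a j (lt_trans hab hbn) (hmem j hj) (fun h => ((h2 j hj).1 h.symm)))
    (by
      intro z hz
      obtain ⟨j, hj, rfl⟩ := List.mem_map.mp hz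
      exact hanti b j hbn (hmem j hj) (fun h => ((h2 j hj).2 h.symm)))

omit [Ring R] in
lemma st9_ofFn_eq_map {n : ℕ} (F : Fin n → R) (F' : ℕ → R)
    (h : ∀ (i : ℕ) (hi : i < n), F ⟨i, hi⟩ = F' i) :
    List.ofFn F = (List.range n).map F' := by
  apply List.ext_getElem
  · simp
  · intro i h1 h2
    simp only [List.getElem_ofFn, List.getElem_map, List.getElem_range]
    exact h i (by simpa using h1)

lemma st9_swap_ofFn {n : ℕ} (g : Fin n → R)
    (hanti : ∀ i j : Fin n, i ≠ j → g i * g j = -(g j * g i))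
    (x y : Fin n) (hxy : x ≠ y) :
    (List.ofFn (g ∘ Equiv.swap x y)).prod = -(List.ofFn g).prod := by
  set gg : ℕ → R := fun i => if h : i < n then g ⟨i, h⟩ else 1 with hgg
  have hanti' : ∀ i j, i < n → j < n → i ≠ j → gg i * gg j = -(gg j * gg i) := by
    intro i j hi hj hij
    simp only [hgg, dif_pos hi, dif_pos hj]
    exact hanti _ _ (fun h => hij (congrArg Fin.val h))
  have h1 : List.ofFn g = (List.range n).map gg :=
    st9_ofFn_eq_map g gg (fun i hi => by simp [hgg, dif_pos hi])
  have hvne : x.val ≠ y.val := fun h => hxy (Fin.ext h)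
  have h2 : List.ofFn (g ∘ Equiv.swap x y)
      = (List.range n).map
          (fun i => if i = x.val then gg y.val else if i = y.val then gg x.val else gg i) := by
    apply st9_ofFn_eq_map
    intro i hi
    by_cases hx : i = x.val
    · have : (⟨i, hi⟩ : Fin n) = x := Fin.ext hx
      simp [this, hx, hgg, y.isLt, Equiv.swap_apply_left]
    · by_cases hy : i = y.val
      · have : (⟨i, hi⟩ : Fin n) = y := Fin.ext hy
        simp [this, hx, hy, hgg, x.isLt, Equiv.swap_apply_right, Ne.symm hvne]
      · have hne1 : (⟨i, hi⟩ : Fin n) ≠ x := fun h => hx (congrArg Fin.val h)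
        have hne2 : (⟨i, hi⟩ : Fin n) ≠ y := fun h => hy (congrArg Fin.val h)
        simp [hx, hy, hgg, hi, Equiv.swap_apply_of_ne_of_ne hne1 hne2]
  rcases Nat.lt_or_ge x.val y.val with hlt | hge
  · rw [h1, h2]
    exact st9_range_swap n x.val y.val gg hlt y.isLt hanti'
  · have hlt : y.val < x.val := by omega
    rw [h1, h2]
    have : (fun i => if i = x.val then gg y.val else if i = y.val then gg x.val else gg i)
        = (fun i => if i = y.val then gg x.val else if i = x.val then gg y.val else gg i) := by
      funext i
      by_cases hx : i = x.val <;> by_cases hy : i = y.val <;> simp_all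
    rw [this]
    exact st9_range_swap n y.val x.val gg hlt x.isLt hanti'

lemma st9_perm_prod {n : ℕ} (e : Equiv.Perm (Fin n)) :
    ∀ (g : Fin n → R), (∀ i j, i ≠ j → g i * g j = -(g j * g i)) →
    (List.ofFn (g ∘ e)).prod = ((Equiv.Perm.sign e : ℤ)) • (List.ofFn g).prod := by
  refine Equiv.Perm.swap_induction_on e ?_ ?_
  · intro g hg
    simp
  · intro f x y hxy ih g hg
    have h1 : g ∘ ⇑(Equiv.swap x y * f) = (g ∘ Equiv.swap x y) ∘ f := by
      funext k
      simp [Equiv.Perm.mul_apply]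
    have h2 : ∀ i j : Fin n, i ≠ j →
        (g ∘ Equiv.swap x y) i * (g ∘ Equiv.swap x y) j
          = -((g ∘ Equiv.swap x y) j * (g ∘ Equiv.swap x y) i) := by
      intro i j hij
      exact hg _ _ ((Equiv.swap x y).injective.ne hij)
    rw [h1, ih (g ∘ Equiv.swap x y) h2, st9_swap_ofFn g hg x y hxy,
      Equiv.Perm.sign_mul, Equiv.Perm.sign_swap hxy]
    push_cast
    simp [smul_neg, neg_smul]

lemma st9_smul_list {A : Type*} [Ring A] [Algebra ℂ A] (c : ℂ) :
    ∀ l : List A, (l.map (c • ·)).prod = c ^ l.length • l.prod := by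
  intro l
  induction l with
  | nil => simp
  | cons a t ih =>
    simp only [List.map_cons, List.prod_cons, List.length_cons, ih]
    rw [smul_mul_smul_comm, pow_succ, mul_comm c]

lemma st9_smul_ofFn {A : Type*} [Ring A] [Algebra ℂ A] (c : ℂ) {m : ℕ} (F : Fin m → A) :
    (List.ofFn fun t => c • F t).prod = c ^ m • (List.ofFn F).prod := by
  have h : (List.ofFn fun t => c • F t) = (List.ofFn F).map (c • ·) :=
    (List.map_ofFn).symm
  rw [h, st9_smul_list]
  simp

lemma st9_pair_prod (g : ℕ → R) : ∀ p : ℕ,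
    ((List.range p).map (fun t => g (2*t) * g (2*t+1))).prod
      = ((List.range (2*p)).map g).prod := by
  intro p
  induction p with
  | zero => simp
  | succ p ih =>
    have h2 : 2*(p+1) = (2*p+1)+1 := by ring
    rw [List.range_succ, h2, List.range_succ, List.range_succ]
    simp only [List.map_append, List.prod_append, List.map_cons, List.map_nil,
      List.prod_cons, List.prod_nil, ih]
    simp [mul_assoc]

lemma st9_square (g : ℕ → R) : ∀ p : ℕ,
    (∀ i j, i < 2*p → j < 2*p → i ≠ j → g i * g j = -(g j * g i)) →
    (∀ i, i < 2*p → g i * g i = -1) →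
    ((List.range (2*p)).map g).prod * ((List.range (2*p)).map g).prod = (-1:R)^p := by
  intro p
  induction p with
  | zero => simp
  | succ p ih =>
    intro hanti hsq
    have hanti' : ∀ i j, i < 2*p → j < 2*p → i ≠ j → g i * g j = -(g j * g i) :=
      fun i j hi hj hij => hanti i j (by omega) (by omega) hij
    have hsq' : ∀ i, i < 2*p → g i * g i = -1 := fun i hi => hsq i (by omega)
    have ihp := ih hanti' hsq'
    set A := ((List.range (2*p)).map g).prod with hA
    set x := g (2*p) with hx
    set y := g (2*p+1) with hy
    have h2 : 2*(p+1) = (2*p+1)+1 := by ring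
    rw [h2, List.range_succ, List.range_succ]
    simp only [List.map_append, List.prod_append, List.map_cons, List.map_nil,
      List.prod_cons, List.prod_nil, mul_one, ← hA, ← hx, ← hy]
    have hmemanti : ∀ (w : R), (∀ j, j < 2*p → w * g j = -(g j * w)) →
        w * A = A * w := by
      intro w hw
      have := st9_move w ((List.range (2*p)).map g) (by
        intro z hz
        obtain ⟨j, hj, rfl⟩ := List.mem_map.mp hz
        exact hw j (List.mem_range.mp hj))
      rw [Even.neg_one_pow (by simpa using even_two_mul p)] at this
      simpa using this
    have exA : x * A = A * x :=
      hmemanti x (fun j hj => hanti (2*p) j (by omega) (by omega) (by omega))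
    have eyA : y * A = A * y :=
      hmemanti y (fun j hj => hanti (2*p+1) j (by omega) (by omega) (by omega))
    have hxy : y * x = -(x * y) := hanti (2*p+1) (2*p) (by omega) (by omega) (by omega)
    have hxx : x * x = -1 := hsq (2*p) (by omega)
    have hyy : y * y = -1 := hsq (2*p+1) (by omega)
    have core : x * (y * (x * y)) = -1 := by
      calc x * (y * (x * y)) = x * ((y * x) * y) := by simp [mul_assoc]
        _ = x * ((-(x * y)) * y) := by rw [hxy]
        _ = -((x * x) * (y * y)) := by simp [mul_assoc]
        _ = -1 := by rw [hxx, hyy]; simp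
    calc (A * x * y) * (A * x * y)
        = A * (x * ((y * A) * (x * y))) := by simp [mul_assoc]
      _ = A * (x * ((A * y) * (x * y))) := by rw [eyA]
      _ = A * ((x * A) * (y * (x * y))) := by simp [mul_assoc]
      _ = A * ((A * x) * (y * (x * y))) := by rw [exA]
      _ = (A * A) * (x * (y * (x * y))) := by simp [mul_assoc]
      _ = (-1:R)^p * -1 := by rw [ihp, core]
      _ = (-1:R)^(p+1) := by rw [pow_succ]

lemma st9_scalar (p : ℕ) (s : ℂ) :
    Complex.I^p * ((1/4:ℂ)^p * s) * ((-1:ℂ)^p * 2^p) = s * (-Complex.I)^p / 2^p := by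
  have h4 : (4:ℂ)^p = 2^p * 2^p := by rw [← mul_pow]; norm_num
  have h2 : (2:ℂ)^p ≠ 0 := pow_ne_zero _ two_ne_zero
  rw [neg_pow, div_pow, one_pow]
  field_simp [h4]
  ring_nf; rw [h4]; ring

end St9Helpers

/-- for `σ_{ij} = (1/4) γ_i γ_j` and any permutation `τ` of
`{1, …, n}`, the supertrace of the product of the `p` pairings is
`tr(Γ σ_{τ(1)τ(2)} ⋯ σ_{τ(n-1)τ(n)}) = sign(τ) (-i)^p / 2^p`. -/
theorem supertrace_product_of_sigmas
    (n p : ℕ) (hn : n = 2 * p) (hpos : 0 < n)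
    (γ : Fin n → Matrix (Fin (2 ^ p)) (Fin (2 ^ p)) ℂ)
    (hC : ∀ i j, γ i * γ j + γ j * γ i
      = (if i = j then (-2 : ℂ) else 0) • (1 : Matrix (Fin (2 ^ p)) (Fin (2 ^ p)) ℂ))
    (σ : Fin n → Fin n → Matrix (Fin (2 ^ p)) (Fin (2 ^ p)) ℂ)
    (hσ : ∀ i j, i ≠ j → σ i j = (1 / 4 : ℂ) • (γ i * γ j))
    (τ : Equiv.Perm (Fin n)) :
    Matrix.trace
        ((Complex.I ^ p • (List.ofFn γ).prod)
          * (List.ofFn fun t : Fin p =>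
              σ (τ ⟨2 * t.1, by have := t.isLt; omega⟩)
                (τ ⟨2 * t.1 + 1, by have := t.isLt; omega⟩)).prod)
      = ((Equiv.Perm.sign τ : ℤ) : ℂ) * (-Complex.I) ^ p / 2 ^ p := by
  subst hn
  have hanti : ∀ i j : Fin (2*p), i ≠ j → γ i * γ j = -(γ j * γ i) := by
    intro i j hij
    have h := hC i j
    rw [if_neg hij, zero_smul] at h
    exact eq_neg_of_add_eq_zero_left h
  have hsq : ∀ i, γ i * γ i = -1 := by
    intro i
    have h := hC i i
    rw [if_pos rfl] at h
    have h2 : (2:ℂ) • (γ i * γ i) = (-2:ℂ) • (1 : Matrix (Fin (2 ^ p)) (Fin (2 ^ p)) ℂ) := by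
      rw [two_smul]; exact h
    calc γ i * γ i = (2:ℂ)⁻¹ • ((2:ℂ) • (γ i * γ i)) := by
          rw [smul_smul]; norm_num
      _ = (2:ℂ)⁻¹ • ((-2:ℂ) • (1 : Matrix (Fin (2 ^ p)) (Fin (2 ^ p)) ℂ)) := by rw [h2]
      _ = -1 := by rw [smul_smul]; norm_num
  -- Step A: replace σ by its definition
  have hfun : (List.ofFn fun t : Fin p =>
        σ (τ ⟨2 * t.1, by have := t.isLt; omega⟩)
          (τ ⟨2 * t.1 + 1, by have := t.isLt; omega⟩))
      = List.ofFn fun t : Fin p =>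
          (1/4 : ℂ) • (γ (τ ⟨2 * t.1, by have := t.isLt; omega⟩)
            * γ (τ ⟨2 * t.1 + 1, by have := t.isLt; omega⟩)) := by
    congr 1
    funext t
    refine hσ _ _ (fun h => ?_)
    have := τ.injective h
    rw [Fin.mk.injEq] at this
    omega
  rw [hfun, st9_smul_ofFn]
  -- Step C: pairs to full product over τ
  set gτ : ℕ → Matrix (Fin (2 ^ p)) (Fin (2 ^ p)) ℂ := fun i => if h : i < 2*p then γ (τ ⟨i, h⟩) else 1 with hgτ
  have hC1 : (List.ofFn fun t : Fin p =>
        γ (τ ⟨2 * t.1, by have := t.isLt; omega⟩)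
          * γ (τ ⟨2 * t.1 + 1, by have := t.isLt; omega⟩))
      = (List.range p).map (fun t => gτ (2*t) * gτ (2*t+1)) := by
    apply st9_ofFn_eq_map
    intro i hi
    simp only [hgτ]
    rw [dif_pos (by omega), dif_pos (by omega)]
  have hC3 : List.ofFn (γ ∘ τ) = (List.range (2*p)).map gτ := by
    apply st9_ofFn_eq_map
    intro i hi
    simp [hgτ, dif_pos hi]
  rw [hC1, st9_pair_prod gτ p, ← hC3, st9_perm_prod τ γ hanti]
  -- Step E: square of the full gamma product
  set gid : ℕ → Matrix (Fin (2 ^ p)) (Fin (2 ^ p)) ℂ := fun i => if h : i < 2*p then γ ⟨i, h⟩ else 1 with hgid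
  have hE0 : List.ofFn γ = (List.range (2*p)).map gid := by
    apply st9_ofFn_eq_map
    intro i hi
    simp [hgid, dif_pos hi]
  have hE : (List.ofFn γ).prod * (List.ofFn γ).prod = ((-1:ℂ)^p) • (1 : Matrix (Fin (2 ^ p)) (Fin (2 ^ p)) ℂ) := by
    rw [hE0, st9_square gid p ?_ ?_]
    · rw [show (-1 : Matrix (Fin (2 ^ p)) (Fin (2 ^ p)) ℂ) = (-1:ℂ) • (1 : Matrix (Fin (2 ^ p)) (Fin (2 ^ p)) ℂ) by simp, smul_pow, one_pow]
    · intro i j hi hj hij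
      simp only [hgid, dif_pos hi, dif_pos hj]
      exact hanti _ _ (fun h => hij (congrArg Fin.val h))
    · intro i hi
      simp only [hgid, dif_pos hi]
      exact hsq _
  -- Step F: assemble
  rw [← Int.cast_smul_eq_zsmul ℂ, smul_smul, smul_mul_smul_comm, hE, smul_smul,
    Matrix.trace_smul, Matrix.trace_one]
  simp only [smul_eq_mul, Fintype.card_fin, Nat.cast_pow, Nat.cast_ofNat]
  rw [mul_assoc (Complex.I ^ p * _)]
  rw [st9_scalar]
end
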